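/- Let F(θ) = (1/2)(1 - (1-2θ)/√(θ² + (1-θ)²)) and Λ(θ) = ∫₀^θ F(t) dt. Then Λ(θ) = (1/2)√(θ² + (1-θ)²) - (1-θ)/2, and for all θ ∈ [0,1]: (θ² + (1-θ)²)·F(θ) + (1 - 2θ)·Λ(θ) = θ/2. -/

import Mathlib

open MeasureTheory Set

/-- The equilibrium cdf of the endogenous test-selection game on `[0,1]`. -/
noncomputable def Feq (θ : ℝ) : ℝ :=
  (1/2) * (1 - (1 - 2*θ) / Real.sqrt (θ^2 + (1-θ)^2))

/-!
Since `(√(θ² + (1-θ)²))' = (2θ - 1)/√(θ² + (1-θ)²)`, the closed form of `Λ` is an antiderivative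
of `F` vanishing at `0`. For the identity, `(θ² + (1-θ)²)·F(θ)` contributes `-(1-2θ)·√(…)/2`,
which cancels against the square-root part of `(1-2θ)·Λ(θ)`; what remains is polynomial.
-/

noncomputable def antiderivFeq (θ : ℝ) : ℝ :=
  (1/2) * Real.sqrt (θ^2 + (1-θ)^2) - (1-θ)/2

lemma sq_add_one_sub_sq_pos (θ : ℝ) : 0 < θ^2 + (1-θ)^2 := by
  nlinarith [sq_nonneg (2*θ - 1)]

lemma sqrt_sq_add_one_sub_sq_pos (θ : ℝ) : 0 < Real.sqrt (θ^2 + (1-θ)^2) :=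
  Real.sqrt_pos.mpr (sq_add_one_sub_sq_pos θ)

lemma continuous_Feq : Continuous Feq := by
  unfold Feq
  fun_prop (disch := intro x; exact (sqrt_sq_add_one_sub_sq_pos x).ne')

lemma hasDerivAt_antiderivFeq (θ : ℝ) : HasDerivAt antiderivFeq (Feq θ) θ := by
  have hQ := ((hasDerivAt_id' θ).fun_pow 2).fun_add (((hasDerivAt_id' θ).const_sub 1).fun_pow 2)
  have h := ((hQ.sqrt (sq_add_one_sub_sq_pos θ).ne').const_mul (1/2 : ℝ)).sub
    (((hasDerivAt_id' θ).const_sub 1).div_const 2)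
  refine h.congr_deriv ?_
  have := (sqrt_sq_add_one_sub_sq_pos θ).ne'
  unfold Feq
  field_simp
  ring

lemma integral_Feq (θ : ℝ) : ∫ t in (0:ℝ)..θ, Feq t = antiderivFeq θ := by
  rw [intervalIntegral.integral_eq_sub_of_hasDerivAt (fun x _ => hasDerivAt_antiderivFeq x)
    (continuous_Feq.intervalIntegrable 0 θ)]
  norm_num [antiderivFeq]

lemma sq_add_one_sub_sq_mul_Feq (θ : ℝ) :
    (θ^2 + (1-θ)^2) * Feq θ =
      ((θ^2 + (1-θ)^2) - (1 - 2*θ) * Real.sqrt (θ^2 + (1-θ)^2)) / 2 := by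
  have hs := (sqrt_sq_add_one_sub_sq_pos θ).ne'
  have hsq := Real.sq_sqrt (sq_add_one_sub_sq_pos θ).le
  unfold Feq
  field_simp
  linear_combination (1 - 2*θ) * hsq

lemma sq_add_one_sub_sq_mul_Feq_add_mul_antiderivFeq (θ : ℝ) :
    (θ^2 + (1-θ)^2) * Feq θ + (1 - 2*θ) * antiderivFeq θ = θ/2 := by
  rw [sq_add_one_sub_sq_mul_Feq, antiderivFeq]
  ring

/-- With `Λ(θ) = ∫₀^θ Feq`, one has `Λ(θ) = (1/2)√(θ²+(1-θ)²) - (1-θ)/2`, and the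
equilibrium ("winning probability 1/2") identity
`(θ² + (1-θ)²)·F(θ) + (1-2θ)·Λ(θ) = θ/2` holds for all `θ ∈ [0,1]`. -/
theorem stmt_13 :
    (∀ θ ∈ Icc (0:ℝ) 1,
      (∫ t in (0:ℝ)..θ, Feq t) = (1/2) * Real.sqrt (θ^2 + (1-θ)^2) - (1-θ)/2) ∧
    (∀ θ ∈ Icc (0:ℝ) 1,
      (θ^2 + (1-θ)^2) * Feq θ + (1 - 2*θ) * (∫ t in (0:ℝ)..θ, Feq t) = θ/2) :=
  ⟨fun θ _ => integral_Feq θ,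
   fun θ _ => (integral_Feq θ).symm ▸ sq_add_one_sub_sq_mul_Feq_add_mul_antiderivFeq θ⟩
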